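/- Let φ, ψ be modal formulas, σ = sig(φ) ∪ sig(ψ) and ρ = sig(φ) ∩ sig(ψ). Then φ → ψ has no interpolant in wK4 if and only if there exist σ-models M_φ and M_ψ based on weakly transitive frames, with roots r_φ and r_ψ respectively, such that (i) M_φ,r_φ ⊨ φ and M_ψ,r_ψ ⊨ ¬ψ, and (ii) M_φ,r_φ ∼ρ M_ψ,r_ψ. -/

import Mathlib

/-- Modal formulas built from propositional variables (indexed by ℕ),
constants ⊤, ⊥, negation, conjunction and the modal operator ◇. -/
inductive MF : Type where
  | var : ℕ → MF
  | top : MF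
  | bot : MF
  | neg : MF → MF
  | and : MF → MF → MF
  | dia : MF → MF
deriving DecidableEq

namespace MF

/-- Disjunction, as an abbreviation. -/
def or (a b : MF) : MF := neg (and (neg a) (neg b))

/-- Implication, as an abbreviation. -/
def imp (a b : MF) : MF := MF.or (neg a) b

/-- Box, as an abbreviation: □φ := ¬◇¬φ. -/
def box (a : MF) : MF := neg (dia (neg a))

/-- The (finite) set of propositional variables occurring in a formula. -/
def sig : MF → Finset ℕ
  | var n => {n}
  | top => ∅
  | bot => ∅
  | neg a => a.sig
  | and a b => a.sig ∪ b.sig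
  | dia a => a.sig

/-- The set of subformulas of a formula. -/
def subf : MF → Finset MF
  | var n => {var n}
  | top => {top}
  | bot => {bot}
  | neg a => insert (neg a) (subf a)
  | and a b => insert (and a b) (subf a ∪ subf b)
  | dia a => insert (dia a) (subf a)

/-- The number of subformulas of a formula. -/
def nsub (a : MF) : ℕ := (subf a).card

end MF

/-- A Kripke model: a binary (accessibility) relation on worlds together with
a valuation assigning to each propositional variable a set of worlds. -/
structure KModel (W : Type) where
  R : W → W → Prop
  val : ℕ → W → Prop

/-- Weak transitivity: xRy and yRz imply x = z or xRz. -/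
def WTrans {W : Type} (R : W → W → Prop) : Prop :=
  ∀ x y z : W, R x y → R y z → x = z ∨ R x z

/-- The usual Kripke truth relation. -/
def Sat {W : Type} (M : KModel W) : W → MF → Prop
  | x, .var n => M.val n x
  | _, .top => True
  | _, .bot => False
  | x, .neg a => ¬ Sat M x a
  | x, .and a b => Sat M x a ∧ Sat M x b
  | x, .dia a => ∃ y, M.R x y ∧ Sat M y a

/-- wK4-validity: truth at every point of every model based on a weakly
transitive frame. -/
def WK4Valid (φ : MF) : Prop :=
  ∀ (W : Type) (M : KModel W), WTrans M.R → ∀ x : W, Sat M x φ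

/-- The cluster of a point x: C(x) = {x} ∪ {y | xRy and yRx}. -/
def cluster {W : Type} (R : W → W → Prop) (x : W) : Set W :=
  {x} ∪ {y | R x y ∧ R y x}

/-- C R C' for sets of points: xRy for some x ∈ C, y ∈ C'. -/
def clusterRel {W : Type} (R : W → W → Prop) (C C' : Set W) : Prop :=
  ∃ x ∈ C, ∃ y ∈ C', R x y

/-- C R y for a set C and point y: xRy for some x ∈ C. -/
def clusterRelPt {W : Type} (R : W → W → Prop) (C : Set W) (y : W) : Prop :=
  ∃ x ∈ C, R x y

/-- C R^s C': C R C' and C ≠ C'. -/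
def clusterRelS {W : Type} (R : W → W → Prop) (C C' : Set W) : Prop :=
  clusterRel R C C' ∧ C ≠ C'

/-- A set is a cluster if it is the cluster of some point. -/
def IsCluster {W : Type} (R : W → W → Prop) (C : Set W) : Prop :=
  ∃ x : W, C = cluster R x

/-- A σ-model is descriptive if it satisfies (dif), (ref) and (com). -/
def Descriptive {W : Type} (σ : Finset ℕ) (M : KModel W) : Prop :=
  (∀ x y : W, (∀ φ : MF, φ.sig ⊆ σ → (Sat M x φ ↔ Sat M y φ)) → x = y) ∧
  (∀ x y : W, M.R x y ↔ ∀ χ : MF, χ.sig ⊆ σ → Sat M y χ → Sat M x (MF.dia χ)) ∧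
  (∀ Γ : Set MF, (∀ φ ∈ Γ, φ.sig ⊆ σ) →
    (∀ Γ' : Finset MF, ↑Γ' ⊆ Γ → ∃ x : W, ∀ φ ∈ Γ', Sat M x φ) →
    ∃ x : W, ∀ φ ∈ Γ, Sat M x φ)

/-- The ρ-type of a point: the set of all ρ-formulas true at it. -/
def rType {W : Type} (M : KModel W) (ρ : Finset ℕ) (x : W) : Set MF :=
  {φ : MF | φ.sig ⊆ ρ ∧ Sat M x φ}

/-- A cluster C is ρ-maximal if whenever C R y and some x ∈ C has the same
ρ-type as y, then y ∈ C. -/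
def RhoMaximal {W : Type} (M : KModel W) (ρ : Finset ℕ) (C : Set W) : Prop :=
  ∀ x ∈ C, ∀ y : W, clusterRelPt M.R C y → rType M ρ x = rType M ρ y → y ∈ C

/-- β is a ρ-bisimulation between M1 and M2: conditions (atom) and (move). -/
def IsBisim {W1 W2 : Type} (ρ : Finset ℕ) (M1 : KModel W1) (M2 : KModel W2)
    (β : W1 → W2 → Prop) : Prop :=
  ∀ x1 x2, β x1 x2 →
    (∀ n ∈ ρ, M1.val n x1 ↔ M2.val n x2) ∧
    (∀ y1, M1.R x1 y1 → ∃ y2, M2.R x2 y2 ∧ β y1 y2) ∧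
    (∀ y2, M2.R x2 y2 → ∃ y1, M1.R x1 y1 ∧ β y1 y2)

/-- M1,x1 ∼ρ M2,x2 : some ρ-bisimulation relates x1 to x2. -/
def Bisimilar {W1 W2 : Type} (ρ : Finset ℕ) (M1 : KModel W1) (x1 : W1)
    (M2 : KModel W2) (x2 : W2) : Prop :=
  ∃ β : W1 → W2 → Prop, IsBisim ρ M1 M2 β ∧ β x1 x2

/-!
Consistency is taken semantically, as finite satisfiability on weakly transitive frames, so the
canonical model is built from maximal finitely satisfiable sets. If no interpolant exists, the
ρ-consequences of φ together with ¬ψ are consistent, and so are φ together with the ρ-part of any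
maximal consistent extension of that set. This gives two points of the canonical model with the
same ρ-type, one satisfying φ and one ¬ψ. The canonical model is weakly transitive (as wK4 proves
◇◇p → p ∨ ◇p) and modally saturated, so by the Hennessy–Milner argument equality of ρ-types is a
ρ-bisimulation; restricting to the submodels generated by the two points makes them roots.
Conversely, an interpolant would be transferred from r₁ to r₂ along the bisimulation.
-/

namespace MF

noncomputable def conj (Δ : Finset MF) : MF := Δ.toList.foldr MF.and MF.top

theorem sig_conj_subset {Δ : Finset MF} {ρ : Finset ℕ} (h : ∀ a ∈ Δ, a.sig ⊆ ρ) :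
    (conj Δ).sig ⊆ ρ := by
  suffices ∀ L : List MF, (∀ a ∈ L, a.sig ⊆ ρ) → (L.foldr MF.and MF.top).sig ⊆ ρ from
    this _ fun a ha => h a (Finset.mem_toList.1 ha)
  intro L hL
  induction L with
  | nil => simp [sig]
  | cons a L ih =>
      rw [List.forall_mem_cons] at hL
      exact Finset.union_subset hL.1 (ih hL.2)

end MF

section Semantics

variable {W : Type} {M : KModel W} {x : W}

@[simp] theorem sat_or {a b : MF} : Sat M x (MF.or a b) ↔ Sat M x a ∨ Sat M x b := by
  simp only [MF.or, Sat]; tauto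

@[simp] theorem sat_imp {a b : MF} : Sat M x (MF.imp a b) ↔ (Sat M x a → Sat M x b) := by
  simp only [MF.imp, sat_or, Sat]; tauto

@[simp] theorem sat_box {a : MF} : Sat M x (MF.box a) ↔ ∀ y, M.R x y → Sat M y a := by
  simp [MF.box, Sat]

@[simp] theorem sat_conj {Δ : Finset MF} : Sat M x (MF.conj Δ) ↔ ∀ a ∈ Δ, Sat M x a := by
  suffices ∀ L : List MF, Sat M x (L.foldr MF.and MF.top) ↔ ∀ a ∈ L, Sat M x a by
    simpa [MF.conj] using this Δ.toList
  intro L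
  induction L with
  | nil => simp [Sat]
  | cons a L ih => simp [Sat, ih]

theorem forall_sat_of_forall_sat_erase {Δ : Finset MF} {b : MF} (hb : Sat M x b)
    (h : ∀ a ∈ Δ.erase b, Sat M x a) : ∀ a ∈ Δ, Sat M x a := by
  intro a ha
  by_cases hab : a = b
  · exact hab ▸ hb
  · exact h a (Finset.mem_erase.2 ⟨hab, ha⟩)

end Semantics

section Bisimulation

variable {W1 W2 : Type} {M1 : KModel W1} {M2 : KModel W2} {ρ : Finset ℕ}

theorem IsBisim.sat_iff {β : W1 → W2 → Prop} (hβ : IsBisim ρ M1 M2 β) {χ : MF}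
    (hχ : χ.sig ⊆ ρ) {x1 : W1} {x2 : W2} (h : β x1 x2) : Sat M1 x1 χ ↔ Sat M2 x2 χ := by
  induction χ generalizing x1 x2 with
  | var n => exact (hβ x1 x2 h).1 n (hχ (Finset.mem_singleton_self n))
  | top | bot => rfl
  | neg a ih => exact not_congr (ih hχ h)
  | and a b iha ihb =>
      rw [MF.sig, Finset.union_subset_iff] at hχ
      exact and_congr (iha hχ.1 h) (ihb hχ.2 h)
  | dia a ih =>
      constructor
      · rintro ⟨y1, hR, hy1⟩
        obtain ⟨y2, hR2, hy⟩ := (hβ x1 x2 h).2.1 y1 hR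
        exact ⟨y2, hR2, (ih hχ hy).1 hy1⟩
      · rintro ⟨y2, hR, hy2⟩
        obtain ⟨y1, hR1, hy⟩ := (hβ x1 x2 h).2.2 y2 hR
        exact ⟨y1, hR1, (ih hχ hy).2 hy2⟩

theorem rType_eq_iff {x1 : W1} {x2 : W2} :
    rType M1 ρ x1 = rType M2 ρ x2 ↔ ∀ χ : MF, χ.sig ⊆ ρ → (Sat M1 x1 χ ↔ Sat M2 x2 χ) := by
  simp only [rType, Set.ext_iff, Set.mem_ofPred_eq]
  exact forall_congr' fun χ => by tauto

theorem rType_eq_of_subset {x1 : W1} {x2 : W2} (h : rType M1 ρ x1 ⊆ rType M2 ρ x2) :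
    rType M1 ρ x1 = rType M2 ρ x2 := by
  refine rType_eq_iff.2 fun χ hχ => ⟨fun h1 => (h ⟨hχ, h1⟩).2, fun h2 => ?_⟩
  by_contra h1
  exact (h (show MF.neg χ ∈ rType M1 ρ x1 from ⟨hχ, h1⟩)).2 h2

/-- Modal saturation; `◇(conj Δ)` at `x` says that `Δ` holds at some successor of `x`. -/
def KModel.Saturated {W : Type} (M : KModel W) : Prop :=
  ∀ (x : W) (T : Set MF), (∀ Δ : Finset MF, ↑Δ ⊆ T → Sat M x (MF.dia (MF.conj Δ))) →
    ∃ y, M.R x y ∧ ∀ a ∈ T, Sat M y a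

theorem KModel.Saturated.exists_rType_eq_of_rel (h2 : M2.Saturated) {x1 y1 : W1} {x2 : W2}
    (h : rType M1 ρ x1 = rType M2 ρ x2) (hR : M1.R x1 y1) :
    ∃ y2, M2.R x2 y2 ∧ rType M1 ρ y1 = rType M2 ρ y2 := by
  obtain ⟨y2, hR2, hy2⟩ := h2 x2 (rType M1 ρ y1) fun Δ hΔ => by
    have : MF.dia (MF.conj Δ) ∈ rType M1 ρ x1 :=
      ⟨MF.sig_conj_subset fun a ha => (hΔ ha).1, y1, hR, sat_conj.2 fun a ha => (hΔ ha).2⟩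
    exact (h ▸ this).2
  exact ⟨y2, hR2, rType_eq_of_subset fun χ hχ => ⟨hχ.1, hy2 χ hχ⟩⟩

theorem isBisim_rType_eq (h1 : M1.Saturated) (h2 : M2.Saturated) :
    IsBisim ρ M1 M2 fun x1 x2 => rType M1 ρ x1 = rType M2 ρ x2 := by
  intro x1 x2 h
  refine ⟨fun n hn => rType_eq_iff.1 h (MF.var n) (Finset.singleton_subset_iff.2 hn),
    fun y1 hR => h2.exists_rType_eq_of_rel h hR, fun y2 hR => ?_⟩
  obtain ⟨y1, hR1, hy⟩ := h1.exists_rType_eq_of_rel h.symm hR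
  exact ⟨y1, hR1, hy.symm⟩

end Bisimulation

section Restriction

def KModel.restrict {W : Type} (M : KModel W) (S : Set W) : KModel S where
  R a b := M.R a b
  val n a := M.val n a

variable {W : Type} {M : KModel W} {S : Set W}

theorem sat_restrict (hS : ∀ a ∈ S, ∀ y, M.R a y → y ∈ S) (χ : MF) (a : S) :
    Sat (M.restrict S) a χ ↔ Sat M a χ := by
  induction χ generalizing a with
  | var | top | bot => rfl
  | neg b ih => exact not_congr (ih a)
  | and b c ihb ihc => exact and_congr (ihb a) (ihc a)
  | dia b ih =>
      constructor
      · rintro ⟨y, hR, hy⟩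
        exact ⟨y, hR, (ih y).1 hy⟩
      · rintro ⟨y, hR, hy⟩
        exact ⟨⟨y, hS a a.2 y hR⟩, hR, (ih _).2 hy⟩

theorem WTrans.restrict (h : WTrans M.R) (S : Set W) : WTrans (M.restrict S).R :=
  fun a b c hab hbc => (h a b c hab hbc).imp_left Subtype.ext

theorem WTrans.insert_succ_closed (h : WTrans M.R) (r : W) :
    ∀ a ∈ insert r {w | M.R r w}, ∀ y, M.R a y → y ∈ insert r {w | M.R r w} := by
  rintro a (rfl | hra) y hay
  · exact Or.inr hay
  · exact (h r a y hra hay).imp Eq.symm id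

theorem restrict_insert_succ_root (r : W) (a : ↥(insert r {w | M.R r w}))
    (ha : a ≠ ⟨r, Set.mem_insert r _⟩) : (M.restrict _).R ⟨r, Set.mem_insert r _⟩ a :=
  a.2.resolve_left fun h => ha (Subtype.ext h)

theorem IsBisim.restrict {W' : Type} {M' : KModel W'} {S' : Set W'} {ρ : Finset ℕ}
    {β : W → W' → Prop} (hβ : IsBisim ρ M M' β) (hS : ∀ a ∈ S, ∀ y, M.R a y → y ∈ S)
    (hS' : ∀ a ∈ S', ∀ y, M'.R a y → y ∈ S') :
    IsBisim ρ (M.restrict S) (M'.restrict S') fun a b => β a b := by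
  intro a b h
  obtain ⟨hval, hforth, hback⟩ := hβ a b h
  refine ⟨hval, fun c hR => ?_, fun c hR => ?_⟩
  · obtain ⟨d, hR', hcd⟩ := hforth c hR
    exact ⟨⟨d, hS' b b.2 d hR'⟩, hR', hcd⟩
  · obtain ⟨d, hR', hdc⟩ := hback c hR
    exact ⟨⟨d, hS a a.2 d hR'⟩, hR', hdc⟩

end Restriction

namespace WK4

def Satisfiable (Γ : Set MF) : Prop :=
  ∃ (W : Type) (M : KModel W), WTrans M.R ∧ ∃ x, ∀ a ∈ Γ, Sat M x a

def Entails (Γ : Set MF) (χ : MF) : Prop :=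
  ∀ (W : Type) (M : KModel W), WTrans M.R → ∀ x, (∀ a ∈ Γ, Sat M x a) → Sat M x χ

def FinSat (Γ : Set MF) : Prop :=
  ∀ Δ : Finset MF, ↑Δ ⊆ Γ → Satisfiable ↑Δ

theorem wk4Valid_imp_of_entails {a b : MF} (h : Entails {a} b) : WK4Valid (MF.imp a b) :=
  fun W M hM x => sat_imp.2 fun ha => h W M hM x fun _ hc => hc ▸ ha

theorem entails_erase_neg_of_not_satisfiable {Δ : Finset MF} (h : ¬ Satisfiable ↑Δ) (b : MF) :
    Entails ↑(Δ.erase b) (MF.neg b) :=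
  fun W M hM x hx hb => h ⟨W, M, hM, x, forall_sat_of_forall_sat_erase hb hx⟩

theorem FinSat.insert_or_insert_neg {Γ : Set MF} (h : FinSat Γ) (χ : MF) :
    FinSat (insert χ Γ) ∨ FinSat (insert (MF.neg χ) Γ) := by
  by_contra! hnot
  simp only [FinSat, not_forall] at hnot
  obtain ⟨⟨Δ1, hΔ1, hu1⟩, ⟨Δ2, hΔ2, hu2⟩⟩ := hnot
  obtain ⟨W, M, hM, x, hx⟩ := h (Δ1.erase χ ∪ Δ2.erase (MF.neg χ)) <| by
    rw [Finset.coe_union, Finset.coe_erase, Finset.coe_erase]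
    exact Set.union_subset (Set.sdiff_singleton_subset_iff.2 hΔ1)
      (Set.sdiff_singleton_subset_iff.2 hΔ2)
  by_cases hχ : Sat M x χ
  · exact hu1 ⟨W, M, hM, x, forall_sat_of_forall_sat_erase hχ fun a ha =>
      hx a (Finset.mem_union_left _ ha)⟩
  · exact hu2 ⟨W, M, hM, x, forall_sat_of_forall_sat_erase (b := MF.neg χ) hχ fun a ha =>
      hx a (Finset.mem_union_right _ ha)⟩

structure MCS (x : Set MF) : Prop where
  finSat : FinSat x
  mem_or_neg_mem : ∀ χ : MF, χ ∈ x ∨ MF.neg χ ∈ x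

theorem FinSat.exists_mcs {Γ : Set MF} (h : FinSat Γ) : ∃ x, Γ ⊆ x ∧ MCS x := by
  obtain ⟨m, hΓm, hmax⟩ := zorn_subset_nonempty {Δ | FinSat Δ}
    (fun c hc hchain hne => ⟨⋃₀ c, fun Δ hΔ => by
      obtain ⟨t, ht, hΔt⟩ := hchain.directedOn.exists_mem_subset_of_finite_of_subset_sUnion hne
        Δ.finite_toSet hΔ
      exact hc ht Δ hΔt, fun _ => Set.subset_sUnion_of_mem⟩) Γ h
  exact ⟨m, hΓm, hmax.prop, fun χ =>
    (hmax.prop.insert_or_insert_neg χ).imp hmax.mem_of_prop_insert hmax.mem_of_prop_insert⟩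

namespace MCS

variable {x : Set MF}

theorem neg_mem_iff (hx : MCS x) {χ : MF} : MF.neg χ ∈ x ↔ χ ∉ x := by
  refine ⟨fun hn hχ => ?_, (hx.mem_or_neg_mem χ).resolve_left⟩
  obtain ⟨W, M, -, w, hw⟩ := hx.finSat {χ, MF.neg χ} (by simp [Set.insert_subset_iff, hχ, hn])
  exact hw (MF.neg χ) (by simp) (hw χ (by simp))

theorem mem_of_entails (hx : MCS x) {Δ : Finset MF} (hΔ : ↑Δ ⊆ x) {χ : MF}
    (h : Entails ↑Δ χ) : χ ∈ x := by
  by_contra hχ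
  obtain ⟨W, M, hM, w, hw⟩ := hx.finSat (insert (MF.neg χ) Δ)
    (by simpa [Set.insert_subset_iff, hΔ] using hx.neg_mem_iff.2 hχ)
  exact hw (MF.neg χ) (by simp) (h W M hM w fun a ha => hw a (by simp [ha]))

theorem top_mem (hx : MCS x) : MF.top ∈ x :=
  hx.mem_of_entails (Δ := ∅) (by simp) fun _ _ _ _ _ => trivial

theorem bot_not_mem (hx : MCS x) : MF.bot ∉ x := fun h => by
  obtain ⟨W, M, -, w, hw⟩ := hx.finSat {MF.bot} (by simpa using h)
  exact hw MF.bot (by simp)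

theorem and_mem_iff (hx : MCS x) {a b : MF} : MF.and a b ∈ x ↔ a ∈ x ∧ b ∈ x := by
  refine ⟨fun h => ⟨?_, ?_⟩, fun h => ?_⟩
  · exact hx.mem_of_entails (Δ := {MF.and a b}) (by simpa using h) fun _ _ _ _ hw =>
      (hw _ (Finset.mem_singleton_self _)).1
  · exact hx.mem_of_entails (Δ := {MF.and a b}) (by simpa using h) fun _ _ _ _ hw =>
      (hw _ (Finset.mem_singleton_self _)).2
  · exact hx.mem_of_entails (Δ := {a, b}) (by simp [Set.insert_subset_iff, h.1, h.2])
      fun _ _ _ _ hw => ⟨hw a (by simp), hw b (by simp)⟩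

theorem eq_of_subset (hx : MCS x) {z : Set MF} (hz : MCS z) (h : z ⊆ x) : x = z :=
  (Set.Subset.antisymm · h) fun χ hχ =>
    (hz.mem_or_neg_mem χ).resolve_right fun hn => hx.neg_mem_iff.1 (h hn) hχ

/-- The seed `T ∪ {δ | □δ ∈ x}` is finitely satisfiable: a point satisfying `◇(⋀Δ)` and the
relevant boxes has a successor satisfying the whole finite part. -/
theorem exists_succ (hx : MCS x) {T : Set MF}
    (hT : ∀ Δ : Finset MF, ↑Δ ⊆ T → MF.dia (MF.conj Δ) ∈ x) :
    ∃ y, MCS y ∧ T ⊆ y ∧ ∀ δ ∈ y, MF.dia δ ∈ x := by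
  classical
  have hseed : FinSat (T ∪ {δ | MF.box δ ∈ x}) := by
    intro Δ hΔ
    obtain ⟨W, M, hM, w, hw⟩ := hx.finSat
      (insert (MF.dia (MF.conj (Δ.filter (· ∈ T)))) ((Δ.filter (· ∉ T)).image MF.box)) <| by
        simp only [Finset.coe_insert, Finset.coe_image, Finset.coe_filter,
          Set.insert_subset_iff, Set.image_subset_iff]
        exact ⟨hT _ fun a ha => (Finset.mem_filter.1 ha).2, fun a ha => (hΔ ha.1).resolve_left ha.2⟩
    obtain ⟨v, hwv, hv⟩ := hw _ (Finset.mem_insert_self _ _)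
    refine ⟨W, M, hM, v, fun a ha => ?_⟩
    by_cases haT : a ∈ T
    · exact sat_conj.1 hv a (Finset.mem_filter.2 ⟨ha, haT⟩)
    · exact sat_box.1 (hw _ (Finset.mem_insert_of_mem (Finset.mem_image_of_mem _
        (Finset.mem_filter.2 ⟨ha, haT⟩)))) v hwv
  obtain ⟨y, hsub, hy⟩ := hseed.exists_mcs
  refine ⟨y, hy, Set.subset_union_left.trans hsub, fun δ hδ => ?_⟩
  by_contra hnot
  have hbox : MF.box (MF.neg δ) ∈ x :=
    hx.mem_of_entails (Δ := {MF.neg (MF.dia δ)}) (by simpa using hx.neg_mem_iff.2 hnot)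
      fun _ _ _ _ hw => sat_box.2 fun v hwv hvδ => hw _ (Finset.mem_singleton_self _) ⟨v, hwv, hvδ⟩
  exact hy.neg_mem_iff.1 (hsub (Or.inr hbox)) hδ

end MCS

abbrev World : Type := {x : Set MF // MCS x}

def canonical : KModel World where
  R x y := ∀ δ ∈ y.1, MF.dia δ ∈ x.1
  val n x := MF.var n ∈ x.1

theorem sat_canonical_iff (χ : MF) (x : World) : Sat canonical x χ ↔ χ ∈ x.1 := by
  induction χ generalizing x with
  | var n => rfl
  | top => simpa [Sat] using x.2.top_mem
  | bot => simpa [Sat] using x.2.bot_not_mem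
  | neg a ih => exact (not_congr (ih x)).trans x.2.neg_mem_iff.symm
  | and a b iha ihb => exact (and_congr (iha x) (ihb x)).trans x.2.and_mem_iff.symm
  | dia a ih =>
      refine ⟨fun ⟨y, hxy, hy⟩ => hxy a ((ih y).1 hy), fun h => ?_⟩
      obtain ⟨y, hy, hay, hxy⟩ := x.2.exists_succ (T := {a}) fun Δ hΔ =>
        x.2.mem_of_entails (Δ := {MF.dia a}) (by simpa using h) fun _ _ _ _ hw => by
          obtain ⟨v, hwv, hv⟩ := hw _ (Finset.mem_singleton_self _)
          exact ⟨v, hwv, sat_conj.2 fun b hb => (hΔ hb : b = a) ▸ hv⟩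
      exact ⟨⟨y, hy⟩, hxy, (ih _).2 (hay rfl)⟩

theorem canonical_saturated : canonical.Saturated := by
  intro x T hT
  obtain ⟨y, hy, hTy, hxy⟩ := x.2.exists_succ fun Δ hΔ =>
    (sat_canonical_iff _ x).1 (hT Δ hΔ)
  exact ⟨⟨y, hy⟩, hxy, fun a ha => (sat_canonical_iff a _).2 (hTy ha)⟩

/-- Given `α ∈ z \ x` and `χ ∈ z`, the instance `◇◇(χ ∧ α) → (χ ∧ α) ∨ ◇(χ ∧ α)` of the wK4 axiom
puts `◇χ` into `x`. -/
theorem wTrans_canonical : WTrans canonical.R := by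
  intro x y z hxy hyz
  refine or_iff_not_imp_left.2 fun hxz χ hχ => ?_
  obtain ⟨α, hαz, hαx⟩ : ∃ α ∈ z.1, α ∉ x.1 := by
    by_contra! h
    exact hxz (Subtype.ext (x.2.eq_of_subset z.2 h))
  have hdd : MF.dia (MF.dia (MF.and χ α)) ∈ x.1 := hxy _ (hyz _ (z.2.and_mem_iff.2 ⟨hχ, hαz⟩))
  refine x.2.mem_of_entails (Δ := {MF.dia (MF.dia (MF.and χ α)), MF.neg α})
    (by simp [Set.insert_subset_iff, hdd, x.2.neg_mem_iff.2 hαx]) fun W M hM w hw => ?_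
  obtain ⟨u, hwu, v, huv, hvχ, hvα⟩ := hw (MF.dia (MF.dia (MF.and χ α))) (by simp)
  rcases hM w u v hwu huv with rfl | hwv
  · exact absurd hvα (hw (MF.neg α) (by simp))
  · exact ⟨v, hwv, hvχ⟩

/-- An unsatisfiable finite part of either seed would yield an interpolant: the conjunction of its
`ρ`-formulas, or the negation of that conjunction. -/
theorem exists_canonical_of_no_interpolant {φ ψ : MF} {ρ : Finset ℕ}
    (h : ∀ ι : MF, ι.sig ⊆ ρ → Entails {φ} ι → ¬ Entails {ι} ψ) :
    ∃ x y : World, Sat canonical x φ ∧ Sat canonical y (MF.neg ψ) ∧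
      rType canonical ρ x = rType canonical ρ y := by
  have hΓy : FinSat (insert (MF.neg ψ) {χ | χ.sig ⊆ ρ ∧ Entails {φ} χ}) := by
    intro Δ hΔ
    by_contra hΔsat
    have hsub : ∀ a ∈ Δ.erase (MF.neg ψ), a.sig ⊆ ρ ∧ Entails {φ} a := fun a ha =>
      (hΔ (Finset.mem_of_mem_erase ha)).resolve_left (Finset.ne_of_mem_erase ha)
    refine h (MF.conj (Δ.erase (MF.neg ψ))) (MF.sig_conj_subset fun a ha => (hsub a ha).1)
      (fun W M hM w hw => sat_conj.2 fun a ha => (hsub a ha).2 W M hM w hw)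
      fun W M hM w hw => of_not_not ?_
    exact entails_erase_neg_of_not_satisfiable hΔsat (MF.neg ψ) W M hM w (sat_conj.1 (hw _ rfl))
  obtain ⟨y, hΓy_sub, hy⟩ := hΓy.exists_mcs
  have hΓx : FinSat (insert φ {χ | χ.sig ⊆ ρ ∧ χ ∈ y}) := by
    intro Δ hΔ
    by_contra hΔsat
    have hsub : ∀ a ∈ Δ.erase φ, a.sig ⊆ ρ ∧ a ∈ y := fun a ha =>
      (hΔ (Finset.mem_of_mem_erase ha)).resolve_left (Finset.ne_of_mem_erase ha)
    have hconj : MF.conj (Δ.erase φ) ∈ y :=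
      hy.mem_of_entails (fun a ha => (hsub a ha).2) fun _ _ _ _ hw => sat_conj.2 hw
    refine hy.neg_mem_iff.1 (hΓy_sub (Or.inr ⟨MF.sig_conj_subset fun a ha => (hsub a ha).1,
      fun W M hM w hw hc => ?_⟩)) hconj
    exact entails_erase_neg_of_not_satisfiable hΔsat φ W M hM w (sat_conj.1 hc) (hw _ rfl)
  obtain ⟨x, hΓx_sub, hx⟩ := hΓx.exists_mcs
  refine ⟨⟨x, hx⟩, ⟨y, hy⟩, (sat_canonical_iff _ _).2 (hΓx_sub (Set.mem_insert _ _)),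
    (sat_canonical_iff _ _).2 (hΓy_sub (Set.mem_insert _ _)), rType_eq_iff.2 fun χ hχ => ?_⟩
  rw [sat_canonical_iff, sat_canonical_iff]
  refine ⟨fun hχx => ?_, fun hχy => hΓx_sub (Or.inr ⟨hχ, hχy⟩)⟩
  by_contra hχy
  exact hx.neg_mem_iff.1 (hΓx_sub (Or.inr ⟨hχ, hy.neg_mem_iff.2 hχy⟩)) hχx

end WK4

open WK4

/-- Criterion for interpolant non-existence in wK4: φ → ψ has no interpolant
in wK4 iff there are rooted models on weakly transitive frames satisfying
φ and ¬ψ at their roots that are ρ-bisimilar at the roots. -/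
theorem stmt14 (φ ψ : MF) :
    (¬ ∃ ι : MF, ι.sig ⊆ φ.sig ∩ ψ.sig ∧
        WK4Valid (MF.imp φ ι) ∧ WK4Valid (MF.imp ι ψ)) ↔
    (∃ (W1 : Type) (M1 : KModel W1) (r1 : W1)
        (W2 : Type) (M2 : KModel W2) (r2 : W2),
      WTrans M1.R ∧ WTrans M2.R ∧
      (∀ x : W1, x ≠ r1 → M1.R r1 x) ∧ (∀ x : W2, x ≠ r2 → M2.R r2 x) ∧
      Sat M1 r1 φ ∧ Sat M2 r2 (MF.neg ψ) ∧
      Bisimilar (φ.sig ∩ ψ.sig) M1 r1 M2 r2) := by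
  constructor
  · intro hno
    obtain ⟨x, y, hφ, hψ, hxy⟩ := exists_canonical_of_no_interpolant fun ι hι h1 h2 =>
      hno ⟨ι, hι, wk4Valid_imp_of_entails h1, wk4Valid_imp_of_entails h2⟩
    have hx := wTrans_canonical.insert_succ_closed x
    have hy := wTrans_canonical.insert_succ_closed y
    exact ⟨_, canonical.restrict _, ⟨x, Set.mem_insert x _⟩,
      _, canonical.restrict _, ⟨y, Set.mem_insert y _⟩,
      wTrans_canonical.restrict _, wTrans_canonical.restrict _,
      restrict_insert_succ_root x, restrict_insert_succ_root y,
      (sat_restrict hx _ _).2 hφ, (sat_restrict hy _ _).2 hψ,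
      _, (isBisim_rType_eq canonical_saturated canonical_saturated).restrict hx hy, hxy⟩
  · rintro ⟨W1, M1, r1, W2, M2, r2, hM1, hM2, -, -, hφ, hψ, β, hβ, hr⟩ ⟨ι, hι, hφι, hιψ⟩
    have hι1 : Sat M1 r1 ι := sat_imp.1 (hφι W1 M1 hM1 r1) hφ
    exact hψ (sat_imp.1 (hιψ W2 M2 hM2 r2) ((hβ.sat_iff hι hr).1 hι1))
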